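/- (Necessary condition / counterexample) Let δ ≥ 1 and p ∈ [12/7, 2]. Suppose that for all f, g ∈ L²(ℝ×𝕋) with f̂ supported in θ₁ = [0,δ]×({0,…,δ}∩ℤ) and ĝ supported in θ₂ = [0,δ]×({100δ,…,101δ}∩ℤ), one has ‖e^{itΔ}f · e^{itΔ}g‖_{L²([−T,T]×ℝ×𝕋)} ≤ δ^{2−4/p} ‖f̂‖_{L^p}‖ĝ‖_{L^p}. Then T ≤ C δ^{8(p−2)/(4−p)} for an absolute constant C. In particular, for p = 12/7 the estimate forces T ≲ δ^{−1}. -/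

import Mathlib

/-!
Test the estimate on `f̂, ĝ` the indicators of `[0, a] × {0}` and `[0, a] × {100δ}` with
`a = 1 / (10 √T)`. For `|t| ≤ T` and `0 ≤ x ≤ √T / 2` the phase `2π (x ξ - 2π t ξ²)` stays in
`[-π/3, π/3]` for `ξ ∈ [0, a]`, so both propagators have modulus at least `a / 2` on a set of
measure `T^{3/2}`, and the left side is at least `T^{-1/4} / 400`, while `‖f̂‖_p = ‖ĝ‖_p = a^{1/p}`.
Hence `T^{1/p - 1/4} ≤ 400 δ^{2 - 4/p}`, i.e. `T ≤ 400⁴ δ^{8(p-2)/(4-p)}`. If instead `a > δ`, the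
bumps do not fit in `θ₁, θ₂`, but then `T < δ⁻² / 100 ≤ δ⁻¹`, and `p ≥ 12/7` makes the exponent at
least `-1`.
-/

open Real MeasureTheory
open scoped ENNReal

/-- Lebesgue × counting measure on `ℝ × ℤ`. -/
noncomputable def muZ : Measure (ℝ × ℤ) :=
  (volume : Measure ℝ).prod Measure.count

/-- The Schrödinger propagator on the waveguide `ℝ × 𝕋`, on the frequency side. -/
noncomputable def waveguideProp (F : ℝ × ℤ → ℂ) (t : ℝ) (x : ℝ × AddCircle (1 : ℝ)) : ℂ :=
  ∑' n : ℤ, ∫ ξ : ℝ,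
    Complex.exp (2 * (π : ℂ) * Complex.I *
      ((x.1 * ξ - 2 * π * t * (ξ ^ 2 + (n : ℝ) ^ 2) : ℝ) : ℂ)) *
      (fourier n x.2) * F (ξ, n)

/-- `θ₁ = [0,δ] × ({0,…,δ} ∩ ℤ)` for `δ = D`. -/
def thetaOne (D : ℕ) : Set (ℝ × ℤ) :=
  {p | 0 ≤ p.1 ∧ p.1 ≤ (D : ℝ) ∧ 0 ≤ p.2 ∧ p.2 ≤ (D : ℤ)}

/-- `θ₂ = [0,δ] × ({100δ,…,101δ} ∩ ℤ)` for `δ = D`. -/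
def thetaTwo (D : ℕ) : Set (ℝ × ℤ) :=
  {p | 0 ≤ p.1 ∧ p.1 ≤ (D : ℝ) ∧ (100 * D : ℤ) ≤ p.2 ∧ p.2 ≤ (101 * D : ℤ)}

open Set

noncomputable def freqBump (a : ℝ) (n : ℤ) : ℝ × ℤ → ℂ :=
  (Icc 0 a ×ˢ {n}).indicator 1

lemma eLpNorm_freqBump {a : ℝ} (ha : 0 ≤ a) (n : ℤ) {p : ℝ≥0∞} (hp0 : p ≠ 0) (hp : p ≠ ∞) :
    eLpNorm (freqBump a n) p muZ = ENNReal.ofReal (a ^ (1 / p.toReal)) := by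
  rw [freqBump, Pi.one_def,
    eLpNorm_indicator_const (measurableSet_Icc.prod (measurableSet_singleton n)) hp0 hp, muZ,
    Measure.prod_prod, Real.volume_Icc, Measure.count_singleton, mul_one, sub_zero, enorm_one,
    one_mul, ENNReal.ofReal_rpow_of_nonneg ha (by positivity)]

lemma support_freqBump_subset_thetaOne {D : ℕ} {a : ℝ} (ha : a ≤ D) :
    Function.support (freqBump a 0) ⊆ thetaOne D := by
  refine support_indicator_subset.trans ?_
  rintro ⟨ξ, n⟩ ⟨⟨hξ0, hξa⟩, rfl : n = 0⟩
  exact ⟨hξ0, hξa.trans ha, le_rfl, Int.natCast_nonneg D⟩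

lemma support_freqBump_subset_thetaTwo {D : ℕ} {a : ℝ} (ha : a ≤ D) :
    Function.support (freqBump a (100 * D)) ⊆ thetaTwo D := by
  refine support_indicator_subset.trans ?_
  rintro ⟨ξ, n⟩ ⟨⟨hξ0, hξa⟩, rfl : n = 100 * D⟩
  exact ⟨hξ0, hξa.trans ha, le_rfl, by omega⟩

lemma norm_waveguideProp_freqBump (a : ℝ) (n : ℤ) (t : ℝ) (x : ℝ × AddCircle (1 : ℝ)) :
    ‖waveguideProp (freqBump a n) t x‖ =
      ‖∫ ξ in Icc 0 a,
        Complex.exp (((2 * π * (x.1 * ξ - 2 * π * t * ξ ^ 2) : ℝ) : ℂ) * Complex.I)‖ := by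
  have hphase : ∀ ξ : ℝ, Complex.exp (2 * π * Complex.I *
      ((x.1 * ξ - 2 * π * t * (ξ ^ 2 + (n : ℝ) ^ 2) : ℝ) : ℂ)) =
      Complex.exp (((2 * π * (x.1 * ξ - 2 * π * t * ξ ^ 2) : ℝ) : ℂ) * Complex.I) *
        Complex.exp (((-(4 * π ^ 2 * t * n ^ 2)) : ℝ) * Complex.I) := by
    intro ξ
    rw [← Complex.exp_add]
    push_cast
    ring_nf
  unfold waveguideProp
  rw [tsum_eq_single n]
  · simp_rw [hphase, freqBump]
    set E := fun ξ : ℝ =>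
      Complex.exp (((2 * π * (x.1 * ξ - 2 * π * t * ξ ^ 2) : ℝ) : ℂ) * Complex.I)
    set c := Complex.exp (((-(4 * π ^ 2 * t * n ^ 2)) : ℝ) * Complex.I) * fourier n x.2
    have hc : ‖c‖ = 1 := by
      rw [norm_mul, Complex.norm_exp_ofReal_mul_I, fourier_apply, Circle.norm_coe, one_mul]
    calc _ = ‖(∫ ξ in Icc 0 a, E ξ) * c‖ := by
          rw [← integral_mul_const, ← integral_indicator measurableSet_Icc]
          congr 2 with ξ
          by_cases hξ : ξ ∈ Icc 0 a <;> simp [hξ, E, c, mul_assoc]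
      _ = _ := by rw [norm_mul, hc, mul_one]
  · intro m hm
    simp [freqBump, hm]

lemma measureReal_univ_div_two_le_norm_integral_exp {α : Type*} [MeasurableSpace α]
    {μ : Measure α} [IsFiniteMeasure μ] {φ : α → ℝ} (hφ : Measurable φ)
    (hφπ : ∀ᵐ x ∂μ, |φ x| ≤ π / 3) :
    μ.real univ / 2 ≤ ‖∫ x, Complex.exp (φ x * Complex.I) ∂μ‖ := by
  have hcos : ∀ y : ℝ, |y| ≤ π / 3 → 1 / 2 ≤ Real.cos y := fun y hy => by
    rw [← Real.cos_abs, ← Real.cos_pi_div_three]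
    exact Real.cos_le_cos_of_nonneg_of_le_pi (abs_nonneg y) (by linarith [Real.pi_pos]) hy
  have hint : Integrable (fun x => Complex.exp (φ x * Complex.I)) μ :=
    Integrable.of_bound (by fun_prop) 1 (Filter.Eventually.of_forall fun x => by
      rw [Complex.norm_exp_ofReal_mul_I])
  have hint_cos : Integrable (fun x => Real.cos (φ x)) μ :=
    Integrable.of_bound (by fun_prop) 1 (Filter.Eventually.of_forall fun x =>
      Real.abs_cos_le_one _)
  calc μ.real univ / 2 = ∫ _, (1 / 2 : ℝ) ∂μ := by rw [integral_const, smul_eq_mul]; ring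
    _ ≤ ∫ x, Real.cos (φ x) ∂μ :=
      integral_mono_ae (integrable_const _) hint_cos (hφπ.mono fun x => hcos _)
    _ = (∫ x, Complex.exp (φ x * Complex.I) ∂μ).re := by
      rw [← RCLike.re_to_complex, ← integral_re hint]
      simp [Complex.exp_ofReal_mul_I_re]
    _ ≤ _ := Complex.re_le_norm _

lemma abs_schrodinger_phase_le_pi_div_three {s t x ξ : ℝ} (hs : 0 < s) (ht : |t| ≤ s ^ 2)
    (hx : x ∈ Icc 0 (s / 2)) (hξ : ξ ∈ Icc 0 (1 / (10 * s))) :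
    |2 * π * (x * ξ - 2 * π * t * ξ ^ 2)| ≤ π / 3 := by
  obtain ⟨hx0, hxs⟩ := hx
  obtain ⟨hξ0, hξs⟩ := hξ
  have hsξ : s * ξ ≤ 1 / 10 := by
    rw [le_div_iff₀ (by positivity)] at hξs; linarith
  have hxξ : |x * ξ| ≤ 1 / 20 := by
    rw [abs_of_nonneg (by positivity)]; nlinarith
  have htξ : |t * ξ ^ 2| ≤ 1 / 100 := by
    rw [abs_mul, abs_of_nonneg (sq_nonneg ξ)]
    nlinarith [abs_nonneg t, mul_nonneg hs.le hξ0]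
  have hπ := Real.pi_pos
  calc |2 * π * (x * ξ - 2 * π * t * ξ ^ 2)| ≤ 2 * π * |x * ξ| + 4 * π ^ 2 * |t * ξ ^ 2| := by
        rw [abs_le]
        constructor <;> nlinarith [le_abs_self (x * ξ), neg_abs_le (x * ξ),
          le_abs_self (t * ξ ^ 2), neg_abs_le (t * ξ ^ 2)]
    _ ≤ 2 * π * (1 / 20) + 4 * π ^ 2 * (1 / 100) := by gcongr
    _ ≤ π / 3 := by nlinarith [Real.pi_le_four]

lemma div_two_le_norm_waveguideProp_freqBump {T t : ℝ} (hT : 0 < T) (ht : t ∈ Icc (-T) T)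
    (n : ℤ) {x : ℝ × AddCircle (1 : ℝ)} (hx : x.1 ∈ Icc 0 (√T / 2)) :
    1 / (10 * √T) / 2 ≤ ‖waveguideProp (freqBump (1 / (10 * √T)) n) t x‖ := by
  have hs : 0 < √T := Real.sqrt_pos.2 hT
  have hts : |t| ≤ √T ^ 2 := by rw [Real.sq_sqrt hT.le]; exact abs_le.2 ht
  have : IsFiniteMeasure (volume.restrict (Icc (0 : ℝ) (1 / (10 * √T)))) :=
    isFiniteMeasure_restrict.2 measure_Icc_lt_top.ne
  rw [norm_waveguideProp_freqBump]
  calc 1 / (10 * √T) / 2 = (volume.restrict (Icc (0 : ℝ) (1 / (10 * √T)))).real univ / 2 := by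
        rw [measureReal_restrict_apply_univ, Real.volume_real_Icc_of_le (by positivity), sub_zero]
    _ ≤ _ := measureReal_univ_div_two_le_norm_integral_exp (by fun_prop)
        (ae_restrict_of_forall_mem measurableSet_Icc fun _ hξ =>
          abs_schrodinger_phase_le_pi_div_three hs hts hx hξ)

lemma mul_measure_rpow_le_eLpNorm {α E : Type*} [MeasurableSpace α] [NormedAddCommGroup E]
    {μ : Measure α} {f : α → E} {S : Set α} {ε : ℝ≥0∞} {p : ℝ≥0∞} (hS : MeasurableSet S)
    (hp0 : p ≠ 0) (hp : p ≠ ∞) (hf : ∀ x ∈ S, ε ≤ ‖f x‖ₑ) :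
    ε * μ S ^ (1 / p.toReal) ≤ eLpNorm f p μ := by
  rw [← enorm_eq_self ε, ← eLpNorm_indicator_const hS hp0 hp]
  refine eLpNorm_mono_enorm fun x => ?_
  by_cases hx : x ∈ S <;> simp [hx, hf]

lemma ofReal_rpow_neg_quarter_div_le_eLpNorm_waveguideProp_mul {T : ℝ} (hT : 0 < T) (n m : ℤ) :
    ENNReal.ofReal (T ^ (-(1 / 4 : ℝ)) / 400) ≤
      eLpNorm (fun q : ℝ × (ℝ × AddCircle (1 : ℝ)) =>
          waveguideProp (freqBump (1 / (10 * √T)) n) q.1 q.2 *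
            waveguideProp (freqBump (1 / (10 * √T)) m) q.1 q.2) 2
        (((volume : Measure ℝ).restrict (Icc (-T) T)).prod
          ((volume : Measure ℝ).prod (volume : Measure (AddCircle (1 : ℝ))))) := by
  set a := 1 / (10 * √T)
  set r := T ^ (1 / 4 : ℝ)
  have hr : 0 < r := by positivity
  have hTr : T = r ^ 4 := by
    rw [← Real.rpow_natCast, ← Real.rpow_mul hT.le]; norm_num
  have hsr : √T = r ^ 2 := by
    rw [hTr, show r ^ 4 = (r ^ 2) ^ 2 by ring, Real.sqrt_sq (by positivity)]
  have hS : MeasurableSet (Icc (-T) T ×ˢ (Icc 0 (√T / 2) ×ˢ (univ : Set (AddCircle (1 : ℝ))))) :=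
    measurableSet_Icc.prod (measurableSet_Icc.prod MeasurableSet.univ)
  refine (le_of_eq ?_).trans (mul_measure_rpow_le_eLpNorm (ε := ENNReal.ofReal (a / 2 * (a / 2)))
    hS two_ne_zero ENNReal.ofNat_ne_top ?_)
  · rw [Measure.prod_prod, Measure.prod_prod, Measure.restrict_apply measurableSet_Icc, inter_self,
      Real.volume_Icc, Real.volume_Icc, AddCircle.measure_univ, ENNReal.ofReal_one, mul_one,
      sub_zero, sub_neg_eq_add, ← ENNReal.ofReal_mul (by linarith), ENNReal.toReal_ofNat,
      ENNReal.ofReal_rpow_of_nonneg (by positivity) (by norm_num),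
      ← ENNReal.ofReal_mul (by positivity)]
    congr 1
    simp only [a]
    rw [show T ^ (-(1 / 4 : ℝ)) = r⁻¹ from Real.rpow_neg hT.le _, hsr, hTr, ← Real.sqrt_eq_rpow,
      show (r ^ 4 + r ^ 4) * (r ^ 2 / 2) = (r ^ 3) ^ 2 by ring, Real.sqrt_sq (by positivity)]
    field_simp
    norm_num
  · rintro ⟨t, x⟩ ⟨ht, hx, -⟩
    rw [← ofReal_norm, norm_mul]
    exact ENNReal.ofReal_le_ofReal (mul_le_mul
      (div_two_le_norm_waveguideProp_freqBump hT ht n hx)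
      (div_two_le_norm_waveguideProp_freqBump hT ht m hx) (by positivity) (norm_nonneg _))

lemma le_rpow_of_lt_one_div_ten_mul_sqrt {T D e : ℝ} (hD : 1 ≤ D) (he : -1 ≤ e) (hT : 0 ≤ T)
    (h : D < 1 / (10 * √T)) : T ≤ D ^ e := by
  have hs : 0 < √T := by
    by_contra! h0
    rw [le_antisymm h0 (Real.sqrt_nonneg T), mul_zero, div_zero] at h
    linarith
  have hsD : 10 * √T * D < 1 := by rwa [lt_div_iff₀ (by positivity), mul_comm] at h
  calc T = √T ^ 2 := (Real.sq_sqrt hT).symm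
    _ ≤ 1 / D := by rw [le_div_iff₀ (by linarith)]; nlinarith
    _ = D ^ (-1 : ℝ) := by rw [Real.rpow_neg_one, one_div]
    _ ≤ D ^ e := Real.rpow_le_rpow_of_exponent_le hD he

lemma rpow_one_div_ten_mul_sqrt_mul_self_le {T p : ℝ} (hT : 0 < T) (hp : 0 < p) :
    (1 / (10 * √T)) ^ (1 / p) * (1 / (10 * √T)) ^ (1 / p) ≤ T ^ (-(1 / p)) := by
  have hs : 0 < √T := Real.sqrt_pos.2 hT
  have ha : 1 / (10 * √T) ≤ T ^ (-(1 / 2 : ℝ)) := by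
    rw [Real.rpow_neg hT.le, ← Real.sqrt_eq_rpow, one_div]
    gcongr
    linarith
  calc _ = (1 / (10 * √T)) ^ (2 / p) := by rw [← Real.rpow_add (by positivity)]; ring_nf
    _ ≤ (T ^ (-(1 / 2 : ℝ))) ^ (2 / p) := by gcongr
    _ = T ^ (-(1 / p)) := by rw [← Real.rpow_mul hT.le]; ring_nf

lemma le_mul_rpow_of_rpow_neg_quarter_div_le {T D p : ℝ} (hT : 0 < T) (hD : 0 < D) (hp0 : 0 < p)
    (hp : p ≤ 2) (h : T ^ (-(1 / 4 : ℝ)) / 400 ≤ D ^ (2 - 4 / p) * T ^ (-(1 / p))) :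
    T ≤ 400 ^ 4 * D ^ (8 * (p - 2) / (4 - p)) := by
  have h4p : 0 < 4 - p := by linarith
  set k := 4 * p / (4 - p) with hk_def
  have hk : 0 < k := by positivity
  have hk4 : k ≤ 4 := by rw [div_le_iff₀ h4p]; linarith
  have hbase : T ^ (1 / p - 1 / 4) ≤ 400 * D ^ (2 - 4 / p) := by
    rw [Real.rpow_neg hT.le, Real.rpow_neg hT.le] at h
    rw [Real.rpow_sub hT, div_le_iff₀ (by positivity)]
    have h1 : 0 < T ^ (1 / 4 : ℝ) := by positivity
    have h2 : 0 < T ^ (1 / p) := by positivity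
    generalize D ^ (2 - 4 / p) = E at h ⊢
    field_simp at h
    linarith
  calc T = (T ^ (1 / p - 1 / 4)) ^ k := by
        rw [← Real.rpow_mul hT.le, show (1 / p - 1 / 4) * k = 1 by rw [hk_def]; field_simp,
          Real.rpow_one]
    _ ≤ (400 * D ^ (2 - 4 / p)) ^ k := by gcongr
    _ = 400 ^ k * D ^ (8 * (p - 2) / (4 - p)) := by
        rw [Real.mul_rpow (by norm_num) (by positivity), ← Real.rpow_mul hD.le]
        congr 2
        rw [hk_def]
        field_simp
        ring
    _ ≤ 400 ^ (4 : ℝ) * D ^ (8 * (p - 2) / (4 - p)) := by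
        gcongr
        norm_num
    _ = 400 ^ 4 * D ^ (8 * (p - 2) / (4 - p)) := by norm_num

/-- Necessary condition (Appendix B): if the bilinear estimate
`‖e^{itΔ}f · e^{itΔ}g‖_{L²([-T,T]×ℝ×𝕋)} ≤ δ^{2-4/p} ‖f̂‖_{L^p}‖ĝ‖_{L^p}` holds
for all data Fourier-supported in `θ₁, θ₂`, then `T ≤ C δ^{8(p-2)/(4-p)}`. -/
theorem bilinear_estimate_necessary_condition :
    ∃ C : ℝ, 0 < C ∧
      ∀ (D : ℕ) (T p : ℝ), 1 ≤ D → 0 < T → 12 / 7 ≤ p → p ≤ 2 →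
        (∀ F G : ℝ × ℤ → ℂ,
          Function.support F ⊆ thetaOne D → Function.support G ⊆ thetaTwo D →
          eLpNorm
            (fun q : ℝ × (ℝ × AddCircle (1 : ℝ)) =>
              waveguideProp F q.1 q.2 * waveguideProp G q.1 q.2)
            2 (((volume : Measure ℝ).restrict (Set.Icc (-T) T)).prod
                ((volume : Measure ℝ).prod (volume : Measure (AddCircle (1 : ℝ)))))
            ≤ ENNReal.ofReal ((D : ℝ) ^ ((2 : ℝ) - 4 / p)) *
                eLpNorm F (ENNReal.ofReal p) muZ * eLpNorm G (ENNReal.ofReal p) muZ) →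
        T ≤ C * (D : ℝ) ^ (8 * (p - 2) / (4 - p)) := by
  refine ⟨400 ^ 4, by norm_num, fun D T p hD hT hp1 hp2 hest => ?_⟩
  have hD1 : (1 : ℝ) ≤ D := by exact_mod_cast hD
  have hp0 : 0 < p := by linarith
  rcases lt_or_ge (D : ℝ) (1 / (10 * √T)) with hsmall | hfit
  · have he : -1 ≤ 8 * (p - 2) / (4 - p) := by rw [le_div_iff₀ (by linarith)]; linarith
    calc T ≤ (D : ℝ) ^ (8 * (p - 2) / (4 - p)) :=
          le_rpow_of_lt_one_div_ten_mul_sqrt hD1 he hT.le hsmall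
      _ ≤ 400 ^ 4 * (D : ℝ) ^ (8 * (p - 2) / (4 - p)) :=
          le_mul_of_one_le_left (by positivity) (by norm_num)
  · have hupper := hest _ _ (support_freqBump_subset_thetaOne hfit)
      (support_freqBump_subset_thetaTwo hfit)
    have hp' : ENNReal.ofReal p ≠ 0 := by simpa using hp0
    rw [eLpNorm_freqBump (by positivity) _ hp' ENNReal.ofReal_ne_top,
      eLpNorm_freqBump (by positivity) _ hp' ENNReal.ofReal_ne_top, ENNReal.toReal_ofReal hp0.le,
      ← ENNReal.ofReal_mul (by positivity), ← ENNReal.ofReal_mul (by positivity)] at hupper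
    have hreal := (ENNReal.ofReal_le_ofReal_iff (by positivity)).1
      ((ofReal_rpow_neg_quarter_div_le_eLpNorm_waveguideProp_mul hT 0 (100 * D)).trans hupper)
    refine le_mul_rpow_of_rpow_neg_quarter_div_le hT (by positivity) hp0 hp2 (hreal.trans ?_)
    rw [mul_assoc]
    gcongr
    exact rpow_one_div_ten_mul_sqrt_mul_self_le hT hp0
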